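/- For every integer n ≥ 4 and every λ with 1/(n+1) ≤ λ ≤ 1, it holds that p_{n+1}(n,λ) ≤ p_{n−2}(n,λ). -/
import Mathlib


/-- The output distribution p(n,λ) of the general attenuator with Fock environment |n⟩,
for ℓ = 0, …, n+1 (the case ℓ = n+1 is the continuous extension of the formula
… · λ^(n-ℓ) · …, which involves λ⁻¹, valid for all λ ∈ (0,1)). -/
noncomputable def pdist (n ℓ : ℕ) (t : ℝ) : ℝ :=
  if ℓ ≤ n then
    1 / (2 * ((n : ℝ) + 1) * (1 - t)) * ((n + 1).choose ℓ : ℝ) * (1 - t) ^ ℓ * t ^ (n - ℓ) *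
      ((1 - t) * ((n : ℝ) - (ℓ : ℝ) + 1) + (((n : ℝ) + 1) * (1 - t) - (ℓ : ℝ)) ^ 2)
  else ((n : ℝ) + 1) * t * (1 - t) ^ n / 2

/-- The output distribution q(n,λ) (spectrum of the joint output state). -/
noncomputable def qdist (n ℓ : ℕ) (t : ℝ) : ℝ :=
  if ℓ ≤ n then
    1 / (2 * ((n : ℝ) + 1) * (1 - t)) * ((n + 1).choose ℓ : ℝ) * (1 - t) ^ ℓ * t ^ (n - ℓ) *
      (t * (ℓ : ℝ) + (((n : ℝ) + 1) * (1 - t) - (ℓ : ℝ)) ^ 2)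
  else (1 - t) ^ n * (1 + ((n : ℝ) + 1) * t) / 2

lemma cert_aux (a b : ℝ) (ha : 0 ≤ a) (hb : 0 ≤ b) :
    0 ≤ 20*a+9*a^2+a^3 + b*(396+243*a+48*a^2+3*a^3) - b^2*(288+180*a+39*a^2+3*a^3)
      + b^3*(66+47*a+12*a^2+a^3) := by
  have hR : (0:ℝ) < a^3+12*a^2+47*a+66 := by positivity
  have key : 0 ≤ (a^3+12*a^2+47*a+66) *
      (20*a+9*a^2+a^3 + b*(396+243*a+48*a^2+3*a^3) - b^2*(288+180*a+39*a^2+3*a^3)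
      + b^3*(66+47*a+12*a^2+a^3)) := by
    nlinarith [mul_nonneg hb (sq_nonneg (2*(a^3+12*a^2+47*a+66)*b - (3*a^3+39*a^2+180*a+288))),
      mul_nonneg hb ha, mul_nonneg hb (pow_nonneg ha 2), mul_nonneg hb (pow_nonneg ha 3),
      mul_nonneg hb (pow_nonneg ha 4), mul_nonneg hb (pow_nonneg ha 5),
      mul_nonneg hb (pow_nonneg ha 6), pow_nonneg ha 2, pow_nonneg ha 3, pow_nonneg ha 4,
      pow_nonneg ha 5, pow_nonneg ha 6]
  nlinarith [key, hR]

lemma final_aux (x t E Q : ℝ) (hx : 4 ≤ x) (ht1 : 1 ≤ t*(x+1)) (ht0 : 0 ≤ t) (hQ : 0 ≤ Q)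
    (hE : E = (1-t)*(x-(x-2)+1) + ((x+1)*(1-t)-(x-2))^2) :
    (x+1)*t*(Q*(1-t)^3)/2 ≤ x*(x-1)/12 * Q * t^2 * E := by
  have K : 6*(x+1)*(1-t)^3 ≤ x*(x-1)*t*E := by
    have hc := cert_aux (x-4) ((x+1)*t - 1) (by linarith) (by linarith)
    rw [hE]
    nlinarith [hc, show (0:ℝ) < (x+1)^2 by positivity]
  have inner : (x+1)*t*(1-t)^3/2 ≤ x*(x-1)/12*t^2*E := by
    nlinarith [mul_le_mul_of_nonneg_left K ht0]
  nlinarith [mul_le_mul_of_nonneg_left inner hQ]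

lemma cast3_aux (m : ℕ) : (((m+3).choose 3 : ℕ) : ℝ) = ((m:ℝ)+3)*((m:ℝ)+2)*((m:ℝ)+1)/6 := by
  induction m with
  | zero => norm_num
  | succ k ih =>
    have h : (k+1+3).choose 3 = (k+3).choose 2 + (k+3).choose 3 := Nat.choose_succ_succ (k+3) 2
    have h2 : (((k+3).choose 2 : ℕ) : ℝ) = ((k:ℝ)+3)*((k:ℝ)+2)/2 := by
      rw [Nat.cast_choose_two]; push_cast; ring
    rw [h]; push_cast
    rw [h2, ih]; ring

theorem pdist_top_le_pdist_n_sub_two (n : ℕ) (hn : 4 ≤ n) (t : ℝ)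
    (h1 : 1 / ((n : ℝ) + 1) ≤ t) (h2 : t ≤ 1) :
    pdist n (n + 1) t ≤ pdist n (n - 2) t := by
  have hn1 : (0:ℝ) < (n:ℝ) + 1 := by positivity
  have hn4 : (4:ℝ) ≤ (n:ℝ) := by exact_mod_cast hn
  have ht1 : 1 ≤ t * ((n:ℝ)+1) := by
    rw [div_le_iff₀ hn1] at h1; linarith
  have ht0 : 0 ≤ t := le_trans (by positivity) h1
  rw [pdist, pdist, if_neg (by omega), if_pos (by omega)]
  have hcast : ((n - 2 : ℕ) : ℝ) = (n:ℝ) - 2 := by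
    have : (2:ℕ) ≤ n := by omega
    push_cast [Nat.cast_sub this]; ring
  have hexp : n - (n - 2) = 2 := by omega
  have hchoose : (((n+1).choose (n-2) : ℕ) : ℝ) = ((n:ℝ)+1)*(n:ℝ)*((n:ℝ)-1)/6 := by
    have e1 : (n+1).choose (n-2) = (n+1).choose 3 := by
      rw [show n - 2 = (n+1) - 3 by omega]
      exact Nat.choose_symm (by omega)
    have e2 : n + 1 = (n - 2) + 3 := by omega
    rw [e1, e2, cast3_aux (n-2), hcast]
    ring
  rw [hexp, hchoose, hcast]
  rcases eq_or_lt_of_le h2 with h2e | h2l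
  · subst h2e
    have h3 : (1:ℝ) - 1 = 0 := by ring
    rw [h3, zero_pow (by omega : n ≠ 0), zero_pow (by omega : n - 2 ≠ 0)]
    simp
  · have hs : (0:ℝ) < 1 - t := by linarith
    have hsne : (1:ℝ) - t ≠ 0 := ne_of_gt hs
    have hp1 : (1 - t) ^ n = (1-t)^(n-3) * (1-t)^3 := by
      rw [← pow_add]; congr 1; omega
    have hp2 : (1 - t) ^ (n-2) = (1-t)^(n-3) * (1-t) := by
      rw [← pow_succ]; congr 1; omega
    rw [hp1, hp2]
    have hRHS : 1/(2*((n:ℝ)+1)*(1-t)) * (((n:ℝ)+1)*(n:ℝ)*((n:ℝ)-1)/6) * ((1-t)^(n-3)*(1-t))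
        * t^2 * ((1 - t) * ((n:ℝ) - ((n:ℝ) - 2) + 1) + (((n:ℝ) + 1) * (1 - t) - ((n:ℝ) - 2)) ^ 2)
        = (n:ℝ)*((n:ℝ)-1)/12 * (1-t)^(n-3) * t^2
          * ((1 - t) * ((n:ℝ) - ((n:ℝ) - 2) + 1) + (((n:ℝ) + 1) * (1 - t) - ((n:ℝ) - 2)) ^ 2) := by
      field_simp
      ring
    rw [hRHS]
    exact final_aux (n:ℝ) t _ _ hn4 ht1 ht0 (by positivity) rfl
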